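/- arXiv:2207.03798 — 2 statements merged into one kernel-verified Lean document; each statement's English description precedes it below -/
import Mathlib

section
/- Let T be a rooted tree on n vertices, rooted at a 1-median r, and suppose there exists c > 0 such that for every vertex u there is a 1-median v of the subtree T_u with depth(v) ≤ depth(u) + c (layers measured from r), where the subtrees hanging below a subtree-1-median each have at most half the subtree's vertices. Then depth(T_u) ≤ (1 + c)·log₂|T_u| for every vertex u. -/
/-- Let `T` be a finite rooted tree (given by a parent map `p` with root `r` and a depth
function `dep`), rooted at a 1-median `r`, and suppose there is `c > 0` such that for
every vertex `u` there is a 1-median `v` of the subtree `T_u` with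
`dep v ≤ dep u + c`, where every subtree hanging strictly below such a subtree-1-median
has at most half the subtree's vertices. Then `depth(T_u) ≤ (1 + c)·log₂ |T_u|` for
every vertex `u`; that is, every `w ∈ T_u` satisfies
`dep w - dep u ≤ (1 + c)·log₂ |T_u|`. -/
theorem subtree_depth_le {V : Type*} [Fintype V]
    (p : V → V) (r : V) (dep : V → ℕ)
    (hr : p r = r) (hreach : ∀ v : V, ∃ m : ℕ, p^[m] v = r)
    (hdr : dep r = 0) (hd : ∀ v : V, v ≠ r → dep v = dep (p v) + 1)
    (c : ℝ) (hc : 0 < c)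
    (hmed : ∀ u : V, ∃ v : V, (∃ m : ℕ, p^[m] v = u) ∧
      (dep v : ℝ) ≤ (dep u : ℝ) + c ∧
      ∀ w : V, (∃ m : ℕ, p^[m] w = u) → dep v < dep w →
        2 * ({x : V | ∃ m : ℕ, p^[m] x = w}).ncard
          ≤ ({x : V | ∃ m : ℕ, p^[m] x = u}).ncard) :
    ∀ u w : V, (∃ m : ℕ, p^[m] w = u) →
      ((dep w - dep u : ℕ) : ℝ)
        ≤ (1 + c) * Real.logb 2 (({x : V | ∃ m : ℕ, p^[m] x = u}).ncard : ℝ) := by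
  -- parent does not increase depth
  have hple : ∀ w : V, dep (p w) ≤ dep w := by
    intro w
    by_cases h : w = r
    · rw [h, hr]
    · rw [hd w h]; omega
  have hiterle : ∀ (m : ℕ) (w : V), dep (p^[m] w) ≤ dep w := by
    intro m
    induction m with
    | zero => intro w; simp
    | succ m ih =>
      intro w
      rw [Function.iterate_succ_apply]
      exact (ih (p w)).trans (hple w)
  -- ancestor at any intermediate depth
  have hanc : ∀ (m : ℕ) (w u : V), p^[m] w = u → ∀ t : ℕ, dep u ≤ t → t ≤ dep w →
      ∃ z : V, (∃ j : ℕ, p^[j] w = z) ∧ (∃ k : ℕ, p^[k] z = u) ∧ dep z = t := by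
    intro m
    induction m with
    | zero =>
      intro w u hwu t h1 h2
      subst hwu
      exact ⟨w, ⟨0, rfl⟩, ⟨0, rfl⟩, le_antisymm h1 h2⟩
    | succ m ih =>
      intro w u hwu t h1 h2
      rcases eq_or_lt_of_le h2 with h | h
      · exact ⟨w, ⟨0, rfl⟩, ⟨m + 1, hwu⟩, h.symm⟩
      · have hwr : w ≠ r := by
          intro hwr
          have hur : u = r := by
            rw [← hwu, hwr]
            exact Function.iterate_fixed hr (m + 1)
          have e1 : dep u = 0 := by rw [hur, hdr]
          have e2 : dep w = 0 := by rw [hwr, hdr]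
          omega
        rw [Function.iterate_succ_apply] at hwu
        have h2' : t ≤ dep (p w) := by
          have := hd w hwr; omega
        obtain ⟨z, ⟨j, hj⟩, hk, hz⟩ := ih (p w) u hwu t h1 h2'
        exact ⟨z, ⟨j + 1, by rw [Function.iterate_succ_apply]; exact hj⟩, hk, hz⟩
  have hdle : ∀ (w u : V), (∃ m : ℕ, p^[m] w = u) → dep u ≤ dep w := by
    rintro w u ⟨m, rfl⟩
    exact hiterle m w
  -- main induction
  have key : ∀ n : ℕ, ∀ u w : V,
      ({x : V | ∃ m : ℕ, p^[m] x = u}).ncard = n → (∃ m : ℕ, p^[m] w = u) →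
      ((dep w - dep u : ℕ) : ℝ) ≤ (1 + c) * Real.logb 2 (n : ℝ) := by
    intro n
    induction n using Nat.strong_induction_on with
    | _ n ih =>
    intro u w hn hw
    obtain ⟨v, hvmem, hvdep, hvhalf⟩ := hmed u
    have huu : u ∈ {x : V | ∃ m : ℕ, p^[m] x = u} := ⟨0, rfl⟩
    have hn1 : 1 ≤ n := by
      rw [← hn]
      exact Set.ncard_pos (Set.toFinite _) |>.2 ⟨u, huu⟩
    have hduw : dep u ≤ dep w := hdle w u hw
    by_cases hcase : dep w ≤ dep v
    · rcases eq_or_lt_of_le hn1 with h1 | h1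
      · -- n = 1
        obtain ⟨a, ha⟩ := Set.ncard_eq_one.1 (hn.trans h1.symm)
        have hwa : w = u := by
          have h1 : w ∈ ({a} : Set V) := ha ▸ hw
          have h2 : u ∈ ({a} : Set V) := ha ▸ huu
          simp at h1 h2; rw [h1, h2]
        rw [hwa, ← h1]
        simp
      · -- n ≥ 2
        have hlog : (1 : ℝ) ≤ Real.logb 2 (n : ℝ) := by
          rw [show (1 : ℝ) = Real.logb 2 2 by simp]
          apply Real.logb_le_logb_of_le (by norm_num) (by norm_num)
          exact_mod_cast h1
        have hduv : dep u ≤ dep v := hdle v u hvmem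
        rw [Nat.cast_sub hduw]
        have : (dep w : ℝ) ≤ (dep u : ℝ) + c := by
          calc (dep w : ℝ) ≤ (dep v : ℝ) := by exact_mod_cast hcase
          _ ≤ (dep u : ℝ) + c := hvdep
        nlinarith
    · -- dep v < dep w
      push_neg at hcase
      have hduv : dep u ≤ dep v := hdle v u hvmem
      obtain ⟨m, hm⟩ := hw
      obtain ⟨z, hwz, hzu, hz⟩ := hanc m w u hm (dep v + 1) (by omega) (by omega)
      have h2 : 2 * ({x : V | ∃ m : ℕ, p^[m] x = z}).ncard ≤ n := by
        rw [← hn]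
        exact hvhalf z hzu (by omega)
      have hz1 : 1 ≤ ({x : V | ∃ m : ℕ, p^[m] x = z}).ncard :=
        Set.ncard_pos (Set.toFinite _) |>.2 ⟨z, 0, rfl⟩
      set s := ({x : V | ∃ m : ℕ, p^[m] x = z}).ncard with hs
      have hslt : s < n := by omega
      have hih := ih s hslt z w rfl hwz
      have hdzw : dep z ≤ dep w := by omega
      have hlogs : Real.logb 2 (s : ℝ) ≤ Real.logb 2 (n : ℝ) - 1 := by
        have h2s : Real.logb 2 ((2 * s : ℕ) : ℝ) ≤ Real.logb 2 (n : ℝ) := by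
          apply Real.logb_le_logb_of_le (by norm_num) (by positivity)
          exact_mod_cast h2
        rw [Nat.cast_mul, Real.logb_mul (by norm_num) (by positivity)] at h2s
        simp at h2s
        linarith
      rw [Nat.cast_sub hduw]
      rw [Nat.cast_sub hdzw] at hih
      have hzc : (dep z : ℝ) ≤ (dep u : ℝ) + c + 1 := by
        have : (dep z : ℝ) = (dep v : ℝ) + 1 := by exact_mod_cast hz
        linarith
      have hmul : (1 + c) * Real.logb 2 (s : ℝ) ≤ (1 + c) * (Real.logb 2 (n : ℝ) - 1) :=
        mul_le_mul_of_nonneg_left hlogs (by linarith)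
      nlinarith
  intro u w hw
  exact key _ u w rfl hw
end

section
/- Let T be the k-stretched binary tree built from a complete binary tree B of depth d with k ≥ 1 and d ≥ 1. Then the sum of the depths (distances from the root) of all vertices of T is at least k²·2^d·(2d - 3), and hence the average depth of a vertex of T is at least k·(d - 3/2). -/
/-- Vertex set of the `k`-stretched binary tree built from a complete binary tree
of depth `d` (with `2^{d+1}-1` vertices): the root, plus `k` path-vertices
`v^1, …, v^{k-1}, v` for each of the `2^{d+1}-2` non-root vertices `v` of `B`.
The pair `(b, i)` encodes the vertex `v^{i+1}` on the path of the non-root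
`B`-vertex with heap index `b+1` (so `(b, k-1)` is the `B`-vertex itself). -/
abbrev StretchV (d k : ℕ) : Type := Unit ⊕ (Fin (2 ^ (d + 1) - 2) × Fin k)

/-- Base relation generating the edges of the `k`-stretched binary tree:
consecutive vertices along each subdivided edge, the root joined to the first
path-vertex of its children, and each `B`-vertex joined to the first
path-vertex of each of its children (heap indexing). -/
def stretchRel (d k : ℕ) : StretchV d k → StretchV d k → Prop :=
  fun x y =>
    match x, y with
    | Sum.inl _, Sum.inr (b, i) => i.val = 0 ∧ b.val / 2 = 0
    | Sum.inr (b, i), Sum.inr (b', i') =>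
        (b = b' ∧ i'.val = i.val + 1) ∨
        (i.val = k - 1 ∧ i'.val = 0 ∧ b'.val / 2 = b.val + 1)
    | _, _ => False

/-- The `k`-stretched binary tree built from a complete binary tree of depth `d`. -/
def stretchedTree (d k : ℕ) : SimpleGraph (StretchV d k) :=
  SimpleGraph.fromRel (stretchRel d k)

/-- The complete binary tree of depth `d` on `Fin (2^{d+1}-1)`, via heap indexing. -/
def binTree (d : ℕ) : SimpleGraph (Fin (2 ^ (d + 1) - 1)) :=
  SimpleGraph.fromRel (fun i j => j.val = 2 * i.val + 1 ∨ j.val = 2 * i.val + 2)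

/-- The embedding of the complete binary tree `B` into its `k`-stretched version:
the root goes to the root, and a non-root vertex with heap index `j` goes to the
last vertex `(j-1, k-1)` of its subdivision path. -/
def stretchEmb (d k : ℕ) (hk : 0 < k) (j : Fin (2 ^ (d + 1) - 1)) : StretchV d k :=
  if h : j.val = 0 then Sum.inl ()
  else Sum.inr (⟨j.val - 1, by have := j.isLt; omega⟩, ⟨k - 1, by omega⟩)

open Finset SimpleGraph

/-- Potential function: lower bound for distance from the root. -/
def pot (d k : ℕ) : StretchV d k → ℕ
  | Sum.inl _ => 0
  | Sum.inr (b, i) => (Nat.log 2 (b.val + 2) - 1) * k + i.val + 1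

lemma log_ge_one (b : ℕ) : 1 ≤ Nat.log 2 (b + 2) :=
  Nat.log_pos one_lt_two (by omega)

lemma log_child {b b' : ℕ} (h : b' / 2 = b + 1) :
    Nat.log 2 (b' + 2) = Nat.log 2 (b + 2) + 1 := by
  have hcase : b' + 2 = 2 * (b + 2) ∨ b' + 2 = 2 * (b + 2) + 1 := by omega
  have h1 : 2 ^ Nat.log 2 (b + 2) ≤ b + 2 := Nat.pow_log_le_self 2 (by omega)
  have h2 : b + 2 < 2 ^ (Nat.log 2 (b + 2) + 1) := Nat.lt_pow_succ_log_self one_lt_two _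
  apply Nat.log_eq_of_pow_le_of_lt_pow
  · rw [pow_succ]; omega
  · rw [pow_succ, pow_succ]; omega

lemma log_root {b : ℕ} (h : b / 2 = 0) : Nat.log 2 (b + 2) = 1 := by
  apply Nat.log_eq_of_pow_le_of_lt_pow <;> simp; omega

lemma pot_adj {d k : ℕ} {x y : StretchV d k} (h : (stretchedTree d k).Adj x y) :
    pot d k y ≤ pot d k x + 1 := by
  rw [stretchedTree, SimpleGraph.fromRel_adj] at h
  obtain ⟨hne, h | h⟩ := h
  · -- rel x y
    match x, y with
    | Sum.inl _, Sum.inr (b, i) =>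
        obtain ⟨hi, hb⟩ := h
        simp only [pot, log_root hb, hi]; omega
    | Sum.inr (b, i), Sum.inr (b', i') =>
        rcases h with ⟨hb, hi⟩ | ⟨hi, hi', hb⟩
        · subst hb; simp only [pot]; omega
        · have hk1 : 1 ≤ k := i.isLt.trans_le' (by omega)
          simp only [pot, log_child hb, hi, hi']
          have hL := log_ge_one b.val
          have hle : k ≤ Nat.log 2 (b.val + 2) * k := Nat.le_mul_of_pos_left k (by omega)
          have hsub : (Nat.log 2 (b.val + 2) - 1) * k = Nat.log 2 (b.val + 2) * k - k := by
            rw [Nat.sub_mul, one_mul]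
          have : Nat.log 2 (b.val + 2) + 1 - 1 = Nat.log 2 (b.val + 2) := by omega
          rw [this]
          omega
  · -- rel y x
    match x, y with
    | Sum.inr (b, i), Sum.inl _ => simp [pot]
    | Sum.inr (b, i), Sum.inr (b', i') =>
        rcases h with ⟨hb, hi⟩ | ⟨hi, hi', hb⟩
        · subst hb; simp only [pot]; omega
        · simp only [pot, log_child hb, hi, hi']
          have hL := log_ge_one b'.val
          have hle : k ≤ Nat.log 2 (b'.val + 2) * k := Nat.le_mul_of_pos_left k (by omega)
          have hsub : (Nat.log 2 (b'.val + 2) - 1) * k = Nat.log 2 (b'.val + 2) * k - k := by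
            rw [Nat.sub_mul, one_mul]
          have : Nat.log 2 (b'.val + 2) + 1 - 1 = Nat.log 2 (b'.val + 2) := by omega
          rw [this]
          omega

lemma pot_le_length {d k : ℕ} : ∀ {u v : StretchV d k} (p : (stretchedTree d k).Walk u v),
    pot d k v ≤ pot d k u + p.length := by
  intro u v p
  induction p with
  | nil => simp
  | cons h p ih =>
      have := pot_adj h
      simp only [SimpleGraph.Walk.length_cons]
      omega

lemma reach (d k : ℕ) (hk : 0 < k) (b : Fin (2 ^ (d + 1) - 2)) (i : Fin k) :
    (stretchedTree d k).Reachable (Sum.inl ()) (Sum.inr (b, i)) := by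
  suffices H : ∀ n (b : Fin (2 ^ (d + 1) - 2)) (i : Fin k),
      b.val * k + i.val = n → (stretchedTree d k).Reachable (Sum.inl ()) (Sum.inr (b, i)) from
    H _ b i rfl
  intro n
  induction n using Nat.strong_induction_on with
  | _ n IH =>
    intro b i hn
    rcases Nat.eq_zero_or_pos i.val with hi0 | hipos
    · -- i = 0 : connect to root or to parent's last vertex
      rcases Nat.lt_or_ge b.val 2 with hb | hb
      · exact SimpleGraph.Adj.reachable <| by
          rw [stretchedTree, SimpleGraph.fromRel_adj]
          exact ⟨by simp, Or.inl ⟨hi0, by omega⟩⟩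
      · set b' : Fin (2 ^ (d + 1) - 2) := ⟨b.val / 2 - 1, by have := b.isLt; omega⟩ with hb'
        have hblt : b'.val < b.val := by simp [hb']; omega
        have hr : (stretchedTree d k).Reachable (Sum.inl ()) (Sum.inr (b', ⟨k - 1, by omega⟩)) := by
          apply IH (b'.val * k + (k - 1)) _ b' _ rfl
          calc b'.val * k + (k - 1) < b'.val * k + k := by omega
            _ = (b'.val + 1) * k := by ring
            _ ≤ b.val * k := Nat.mul_le_mul_right k (by omega)
            _ ≤ n := by omega
        refine hr.trans (SimpleGraph.Adj.reachable ?_)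
        rw [stretchedTree, SimpleGraph.fromRel_adj]
        refine ⟨?_, Or.inl (Or.inr ⟨rfl, hi0, by simp [hb']; omega⟩)⟩
        simp only [ne_eq, Sum.inr.injEq, Prod.mk.injEq, not_and]
        intro hbb
        exact absurd (congrArg Fin.val hbb) (by omega)
    · -- i > 0 : come from (b, i-1)
      have hr : (stretchedTree d k).Reachable (Sum.inl ())
          (Sum.inr (b, ⟨i.val - 1, by omega⟩)) := by
        apply IH (b.val * k + (i.val - 1)) (by omega) b _ rfl
      refine hr.trans (SimpleGraph.Adj.reachable ?_)
      rw [stretchedTree, SimpleGraph.fromRel_adj]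
      refine ⟨?_, Or.inl (Or.inl ⟨rfl, by simp; omega⟩)⟩
      simp only [ne_eq, Sum.inr.injEq, Prod.mk.injEq, true_and]
      intro hii
      exact absurd (congrArg Fin.val hii) (by simp; omega)

lemma pot_le_dist {d k : ℕ} (hk : 0 < k) (x : StretchV d k) :
    pot d k x ≤ (stretchedTree d k).dist (Sum.inl ()) x := by
  match x with
  | Sum.inl _ => simp [pot]
  | Sum.inr (b, i) =>
      obtain ⟨p, hp⟩ := (reach d k hk b i).exists_walk_length_eq_dist
      have := pot_le_length p
      simp only [pot] at this ⊢
      omega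

lemma sum_log (d : ℕ) :
    (∑ b ∈ Finset.range (2 ^ (d + 1) - 2), Nat.log 2 (b + 2)) + 2 ^ (d + 1)
      = d * 2 ^ (d + 1) + 2 := by
  induction d with
  | zero => simp
  | succ d ih =>
      have hsplit : 2 ^ (d + 2) - 2 = (2 ^ (d + 1) - 2) + 2 ^ (d + 1) := by
        have : 2 ≤ 2 ^ (d + 1) := Nat.one_lt_two_pow (by omega)
        rw [pow_succ]; omega
      rw [hsplit, Finset.sum_range_add]
      have h2 : ∀ j ∈ Finset.range (2 ^ (d + 1)),
          Nat.log 2 (2 ^ (d + 1) - 2 + j + 2) = d + 1 := by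
        intro j hj
        rw [Finset.mem_range] at hj
        have h1 : 2 ≤ 2 ^ (d + 1) := Nat.one_lt_two_pow (by omega)
        apply Nat.log_eq_of_pow_le_of_lt_pow
        · omega
        · rw [pow_succ]; omega
      rw [Finset.sum_congr rfl h2, Finset.sum_const, Finset.card_range, smul_eq_mul]
      have h1 : 2 ≤ 2 ^ (d + 1) := Nat.one_lt_two_pow (by omega)
      have : (2:ℕ) ^ (d + 2) = 2 * 2 ^ (d + 1) := by rw [pow_succ]; ring
      rw [this]
      nlinarith [ih]

/-- In the `k`-stretched binary tree (`k ≥ 1`, `d ≥ 1`), the sum of the depths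
(distances from the root) of all vertices is at least `k²·2^d·(2d - 3)`, and hence
the average depth of a vertex is at least `k·(d - 3/2)`. -/
theorem stretchedTree_sum_depth (d k : ℕ) (hd : 1 ≤ d) (hk : 1 ≤ k) :
    (k : ℝ) ^ 2 * 2 ^ d * (2 * (d : ℝ) - 3) ≤
      (∑ x : StretchV d k, ((stretchedTree d k).dist (Sum.inl ()) x : ℝ)) ∧
    (k : ℝ) * ((d : ℝ) - 3 / 2) ≤
      (∑ x : StretchV d k, ((stretchedTree d k).dist (Sum.inl ()) x : ℝ)) /
        (Fintype.card (StretchV d k) : ℝ) := by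
  have hk0 : 0 < k := hk
  set N := 2 ^ (d + 1) - 2 with hNdef
  set S := ∑ b ∈ Finset.range N, Nat.log 2 (b + 2) with hSdef
  have hP2 : (2 : ℕ) ≤ 2 ^ (d + 1) := Nat.one_lt_two_pow (by omega)
  have hNR : (N : ℝ) = 2 * 2 ^ d - 2 := by
    rw [hNdef]; push_cast [Nat.cast_sub hP2]; rw [pow_succ]; ring
  have hSR : (S : ℝ) = 2 * 2 ^ d * d + 2 - 2 * 2 ^ d := by
    have h := sum_log d
    rw [← hNdef, ← hSdef] at h
    have h' : (S : ℝ) + (2 ^ (d + 1) : ℕ) = (d : ℝ) * (2 ^ (d + 1) : ℕ) + 2 := by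
      exact_mod_cast congrArg (fun n : ℕ => (n : ℝ)) h
    push_cast at h'
    rw [pow_succ] at h'
    linarith
  have hk1 : (1 : ℝ) ≤ (k : ℝ) := by exact_mod_cast hk
  have hd1 : (1 : ℝ) ≤ (d : ℝ) := by exact_mod_cast hd
  have hP : (2 : ℝ) ≤ 2 ^ d := by
    calc (2 : ℝ) = 2 ^ 1 := (pow_one 2).symm
    _ ≤ 2 ^ d := pow_le_pow_right₀ one_le_two hd
  -- Gauss sum
  have hG : (∑ i ∈ Finset.range k, (i : ℝ)) = (k : ℝ) * ((k : ℝ) - 1) / 2 := by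
    have h := Finset.sum_range_id_mul_two k
    have h' := congrArg (fun n : ℕ => (n : ℝ)) h
    push_cast [Nat.cast_sub hk] at h'
    linarith
  -- sum of logs cast
  have hScast : (S : ℝ) = ∑ b ∈ Finset.range N, (Nat.log 2 (b + 2) : ℝ) := by
    rw [hSdef]; push_cast; rfl
  have hLsum : (∑ b ∈ Finset.range N, ((Nat.log 2 (b + 2) : ℝ) - 1)) = (S : ℝ) - N := by
    rw [Finset.sum_sub_distrib, ← hScast, Finset.sum_const, Finset.card_range, nsmul_eq_mul,
      mul_one]
  -- sum of the potential
  have hpotsum : (∑ x : StretchV d k, (pot d k x : ℝ)) =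
      (k : ℝ) ^ 2 * ((S : ℝ) - N) + (N : ℝ) * ((k : ℝ) * ((k : ℝ) - 1) / 2 + k) := by
    rw [Fintype.sum_sum_type]
    have h0 : (∑ a : Unit, (pot d k (Sum.inl a) : ℝ)) = 0 := by simp [pot]
    rw [h0, zero_add, Fintype.sum_prod_type]
    have hval : ∀ (b : Fin N) (i : Fin k), (pot d k (Sum.inr (b, i)) : ℝ) =
        ((Nat.log 2 (b.val + 2) : ℝ) - 1) * (k : ℝ) + (i.val : ℝ) + 1 := by
      intro b i
      simp only [pot]
      push_cast [Nat.cast_sub (log_ge_one b.val)]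
      ring
    simp_rw [hval]
    have hrange : (∑ b : Fin N, ∑ i : Fin k,
          (((Nat.log 2 (b.val + 2) : ℝ) - 1) * (k : ℝ) + (i.val : ℝ) + 1)) =
        ∑ b ∈ Finset.range N, ∑ i ∈ Finset.range k,
          (((Nat.log 2 (b + 2) : ℝ) - 1) * (k : ℝ) + (i : ℝ) + 1) := by
      rw [← Fin.sum_univ_eq_sum_range (fun b => ∑ i ∈ Finset.range k,
        (((Nat.log 2 (b + 2) : ℝ) - 1) * (k : ℝ) + (i : ℝ) + 1)) N]
      exact Finset.sum_congr rfl fun b _ =>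
        Fin.sum_univ_eq_sum_range
          (fun i => (((Nat.log 2 (b.val + 2) : ℝ) - 1) * (k : ℝ) + (i : ℝ) + 1)) k
    rw [hrange]
    have hinner : ∀ b : ℕ, (∑ i ∈ Finset.range k,
        (((Nat.log 2 (b + 2) : ℝ) - 1) * (k : ℝ) + (i : ℝ) + 1)) =
        ((Nat.log 2 (b + 2) : ℝ) - 1) * (k : ℝ) ^ 2 +
          ((k : ℝ) * ((k : ℝ) - 1) / 2 + k) := by
      intro b
      rw [Finset.sum_add_distrib, Finset.sum_add_distrib, hG, Finset.sum_const,
        Finset.sum_const, Finset.card_range, nsmul_eq_mul, nsmul_eq_mul, mul_one]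
      ring
    rw [Finset.sum_congr rfl fun b _ => hinner b, Finset.sum_add_distrib,
      Finset.sum_const, Finset.card_range, nsmul_eq_mul, ← Finset.sum_mul, hLsum]
    ring
  -- the distance sum dominates the potential sum
  have hsum_le : (∑ x : StretchV d k, (pot d k x : ℝ)) ≤
      ∑ x : StretchV d k, ((stretchedTree d k).dist (Sum.inl ()) x : ℝ) :=
    Finset.sum_le_sum fun x _ => Nat.cast_le.2 (pot_le_dist hk0 x)
  have hk0' : (0 : ℝ) ≤ (k : ℝ) := by positivity
  have hB : (k : ℝ) ^ 2 * 2 ^ d * (2 * (d : ℝ) - 3) ≤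
      ∑ x : StretchV d k, ((stretchedTree d k).dist (Sum.inl ()) x : ℝ) := by
    refine le_trans ?_ hsum_le
    rw [hpotsum, hSR, hNR]
    nlinarith [sq_nonneg (k : ℝ), mul_nonneg (by linarith : (0 : ℝ) ≤ 2 ^ d - 1) hk0']
  refine ⟨hB, ?_⟩
  have hcardN : Fintype.card (StretchV d k) = 1 + N * k := by
    simp [StretchV, hNdef]
  have hcard : (Fintype.card (StretchV d k) : ℝ) = 1 + (2 * 2 ^ d - 2) * k := by
    rw [hcardN]; push_cast; rw [hNR]
  have hpos : (0 : ℝ) < (Fintype.card (StretchV d k) : ℝ) := by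
    rw [hcard]
    nlinarith [mul_nonneg (by linarith : (0 : ℝ) ≤ 2 * 2 ^ d - 2) hk0']
  have hsum0 : (0 : ℝ) ≤ ∑ x : StretchV d k, ((stretchedTree d k).dist (Sum.inl ()) x : ℝ) :=
    Finset.sum_nonneg fun x _ => Nat.cast_nonneg _
  rw [le_div_iff₀ hpos, hcard]
  set T := ∑ x : StretchV d k, ((stretchedTree d k).dist (Sum.inl ()) x : ℝ) with hTdef
  have h22 : (0 : ℝ) ≤ 2 * 2 ^ d - 2 := by linarith
  have hc0 : (0 : ℝ) ≤ 1 + (2 * 2 ^ d - 2) * k := by nlinarith [mul_nonneg h22 hk0']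
  rcases Nat.lt_or_ge d 2 with hd2 | hd2
  · have hdle : (d : ℝ) ≤ 1 := by exact_mod_cast (by omega : d ≤ 1)
    have hprod : (0 : ℝ) ≤ (3 / 2 - (d : ℝ)) * ((k : ℝ) * (1 + (2 * 2 ^ d - 2) * k)) :=
      mul_nonneg (by linarith) (mul_nonneg hk0' hc0)
    have hid : (k : ℝ) * ((d : ℝ) - 3 / 2) * (1 + (2 * 2 ^ d - 2) * k) =
        -((3 / 2 - (d : ℝ)) * ((k : ℝ) * (1 + (2 * 2 ^ d - 2) * k))) := by ring
    linarith [hsum0, hprod]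
  · have hdge : (2 : ℝ) ≤ (d : ℝ) := by exact_mod_cast hd2
    have hprod : (0 : ℝ) ≤ (k : ℝ) * (((d : ℝ) - 3 / 2) * (2 * (k : ℝ) - 1)) :=
      mul_nonneg hk0' (mul_nonneg (by linarith) (by linarith))
    have hid : (k : ℝ) * ((d : ℝ) - 3 / 2) * (1 + (2 * 2 ^ d - 2) * k) =
        (k : ℝ) ^ 2 * 2 ^ d * (2 * (d : ℝ) - 3) -
          (k : ℝ) * (((d : ℝ) - 3 / 2) * (2 * (k : ℝ) - 1)) := by ring
    linarith [hB, hprod]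
end
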